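/- arXiv:1902.07284 — 2 statements merged into one kernel-verified Lean document; each statement's English description precedes it below -/
import Mathlib

section
/- (Varshamov–Gilbert bound.) For every N ≥ 8, there exist M ≥ exp(N/8) binary vectors b_1, …, b_M ∈ {0,1}^N such that for all i ≠ j, the Hamming distance between b_i and b_j is at least N/4. -/
open Finset

private lemma vg_ball_sum (N : ℕ) (s : Fin N → Bool) (x : ℝ) :
    ∑ v : Fin N → Bool, x ^ hammingDist v s = (1 + x) ^ N := by
  have h1 : ∀ v : Fin N → Bool,
      x ^ hammingDist v s = ∏ i, (if v i ≠ s i then x else 1) := by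
    intro v
    rw [hammingDist, ← Finset.prod_const, Finset.prod_filter]
  calc ∑ v : Fin N → Bool, x ^ hammingDist v s
      = ∑ v ∈ Fintype.piFinset (fun _ : Fin N => (Finset.univ : Finset Bool)),
          ∏ i, (if v i ≠ s i then x else 1) := by
        rw [Fintype.piFinset_univ]
        exact Finset.sum_congr rfl fun v _ => h1 v
    _ = ∏ i : Fin N, ∑ b : Bool, (if b ≠ s i then x else 1) :=
        Finset.sum_prod_piFinset univ fun i b => if b ≠ s i then x else 1
    _ = (1 + x) ^ N := by
        have : ∀ i : Fin N, (∑ b : Bool, (if b ≠ s i then x else 1)) = 1 + x := by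
          intro i; cases h : s i <;> simp [add_comm]
        rw [Finset.prod_congr rfl fun i _ => this i, Finset.prod_const, card_univ,
          Fintype.card_fin]

/-- Varshamov–Gilbert bound: for every `N ≥ 8` there exist at least `exp(N/8)` binary
vectors in `{0,1}^N` with pairwise Hamming distance at least `N/4`. -/
theorem varshamov_gilbert (N : ℕ) (hN : 8 ≤ N) :
    ∃ (M : ℕ) (b : Fin M → (Fin N → Bool)),
      Real.exp ((N : ℝ) / 8) ≤ (M : ℝ) ∧
      ∀ i j : Fin M, i ≠ j → (N : ℝ) / 4 ≤ (hammingDist (b i) (b j) : ℝ) := by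
  classical
  set V := (Fin N → Bool)
  let good : Finset V → Prop := fun S => ∀ x ∈ S, ∀ y ∈ S, x ≠ y → N ≤ 4 * hammingDist x y
  obtain ⟨S, hSmem, hSmax⟩ :=
    Finset.exists_max_image ((univ : Finset (Finset V)).filter good) (fun S => S.card)
      ⟨∅, by simp [good]⟩
  have hSgood : good S := (Finset.mem_filter.1 hSmem).2
  -- covering property
  have hcover : ∀ v : V, ∃ s ∈ S, 4 * hammingDist v s < N := by
    intro v
    by_contra hc
    push_neg at hc
    have hvS : v ∉ S := by
      intro hv
      have := hc v hv
      simp [hammingDist_self] at this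
      omega
    have hgood' : good (insert v S) := by
      intro x hx y hy hxy
      rcases Finset.mem_insert.1 hx with hxv | hx
      · rcases Finset.mem_insert.1 hy with hyv | hy
        · exact absurd (hxv.trans hyv.symm) hxy
        · exact hxv ▸ hc y hy
      · rcases Finset.mem_insert.1 hy with hyv | hy
        · rw [hyv, hammingDist_comm]; exact hc x hx
        · exact hSgood x hx y hy hxy
    have hmem' : insert v S ∈ (univ : Finset (Finset V)).filter good :=
      Finset.mem_filter.2 ⟨Finset.mem_univ _, hgood'⟩
    have := hSmax _ hmem'
    rw [Finset.card_insert_of_notMem hvS] at this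
    omega
  -- counting: univ covered by balls
  have hsub : (univ : Finset V) ⊆ S.biUnion
      (fun s => univ.filter (fun v => 4 * hammingDist v s < N)) := by
    intro v _
    obtain ⟨s, hs, hds⟩ := hcover v
    exact Finset.mem_biUnion.2 ⟨s, hs, Finset.mem_filter.2 ⟨Finset.mem_univ _, hds⟩⟩
  have hcard : (2 : ℕ) ^ N ≤
      ∑ s ∈ S, (univ.filter (fun v : V => 4 * hammingDist v s < N)).card := by
    calc (2:ℕ) ^ N = (univ : Finset V).card := by
          simp [V, card_univ]
      _ ≤ _ := le_trans (Finset.card_le_card hsub) (Finset.card_biUnion_le)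
  -- real ball bound
  have hball : ∀ s : V,
      ((univ.filter (fun v : V => 4 * hammingDist v s < N)).card : ℝ) ≤
        (3 : ℝ) ^ ((N : ℝ) / 4) * (4 / 3) ^ N := by
    intro s
    calc ((univ.filter (fun v : V => 4 * hammingDist v s < N)).card : ℝ)
        = ∑ v ∈ univ.filter (fun v : V => 4 * hammingDist v s < N), (1:ℝ) := by
          simp
      _ ≤ ∑ v ∈ univ.filter (fun v : V => 4 * hammingDist v s < N),
            (3 : ℝ) ^ ((N : ℝ) / 4) * (1/3 : ℝ) ^ hammingDist v s := by
          refine Finset.sum_le_sum fun v hv => ?_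
          have hd : 4 * hammingDist v s < N := (Finset.mem_filter.1 hv).2
          have hk : (hammingDist v s : ℝ) ≤ (N : ℝ) / 4 := by
            rw [le_div_iff₀ (by norm_num : (0:ℝ) < 4)]
            exact_mod_cast (by omega : hammingDist v s * 4 ≤ N)
          have h1 : (1:ℝ) = (3:ℝ) ^ hammingDist v s * (1/3 : ℝ) ^ hammingDist v s := by
            rw [← mul_pow]; norm_num
          refine h1.trans_le (mul_le_mul_of_nonneg_right ?_ (by positivity))
          rw [← Real.rpow_natCast 3 (hammingDist v s)]
          exact Real.rpow_le_rpow_of_exponent_le (by norm_num) hk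
      _ ≤ ∑ v : V, (3 : ℝ) ^ ((N : ℝ) / 4) * (1/3 : ℝ) ^ hammingDist v s := by
          refine Finset.sum_le_sum_of_subset_of_nonneg (Finset.filter_subset _ _)
            fun v _ _ => ?_
          positivity
      _ = (3 : ℝ) ^ ((N : ℝ) / 4) * (4 / 3) ^ N := by
          rw [← Finset.mul_sum, vg_ball_sum]
          norm_num
  -- combine counting with ball bound
  set B : ℝ := (3 : ℝ) ^ ((N : ℝ) / 4) * (4 / 3) ^ N with hB
  have hBpos : 0 < B := by positivity
  have h2N : (2 : ℝ) ^ N ≤ (S.card : ℝ) * B := by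
    have h1 : ((2:ℕ) ^ N : ℝ) ≤ ((∑ s ∈ S,
        (univ.filter (fun v : V => 4 * hammingDist v s < N)).card : ℕ) : ℝ) := by
      exact_mod_cast hcard
    push_cast at h1
    calc (2 : ℝ) ^ N ≤ ∑ s ∈ S,
          ((univ.filter (fun v : V => 4 * hammingDist v s < N)).card : ℝ) := h1
      _ ≤ ∑ _s ∈ S, B := Finset.sum_le_sum fun s _ => hball s
      _ = (S.card : ℝ) * B := by rw [Finset.sum_const, nsmul_eq_mul]
  -- key numeric inequality
  have hkey : Real.exp ((N : ℝ) / 8) * B ≤ (2 : ℝ) ^ N := by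
    have hc : Real.exp (1/8) * ((3:ℝ) ^ ((1:ℝ)/4) * (4/3)) ≤ 2 := by
      rw [← pow_le_pow_iff_left₀ (by positivity) (by norm_num : (0:ℝ) ≤ 2)
        (by norm_num : 8 ≠ 0)]
      have he : (Real.exp (1/8)) ^ (8:ℕ) = Real.exp 1 := by
        rw [← Real.exp_nat_mul]; norm_num
      have h3 : ((3:ℝ) ^ ((1:ℝ)/4)) ^ (8:ℕ) = 9 := by
        rw [← Real.rpow_natCast ((3:ℝ) ^ ((1:ℝ)/4)) 8, ← Real.rpow_mul (by norm_num)]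
        norm_num
      rw [mul_pow, mul_pow, he, h3]
      have := Real.exp_one_lt_d9
      nlinarith [Real.exp_pos 1]
    have e1 : Real.exp ((N:ℝ)/8) = (Real.exp (1/8))^N := by
      rw [← Real.exp_nat_mul]; congr 1; ring
    have e2 : ((3:ℝ) ^ ((1:ℝ)/4))^N = (3:ℝ) ^ ((N : ℝ)/4) := by
      rw [← Real.rpow_natCast ((3:ℝ) ^ ((1:ℝ)/4)) N, ← Real.rpow_mul (by norm_num)]
      congr 1; ring
    calc Real.exp ((N : ℝ) / 8) * B
        = (Real.exp (1/8) * ((3:ℝ) ^ ((1:ℝ)/4) * (4/3))) ^ N := by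
          rw [mul_pow, mul_pow, e2, ← e1, hB]
      _ ≤ (2:ℝ) ^ N := pow_le_pow_left₀ (by positivity) hc N
  -- conclude
  refine ⟨S.card, fun i => (S.equivFin.symm i : V), ?_, ?_⟩
  · have := hkey.trans h2N
    exact le_of_mul_le_mul_right this hBpos
  · intro i j hij
    have hne : (S.equivFin.symm i : V) ≠ (S.equivFin.symm j : V) := by
      intro h
      exact hij (S.equivFin.symm.injective (Subtype.coe_injective h))
    have := hSgood _ (S.equivFin.symm i).2 _ (S.equivFin.symm j).2 hne
    rw [div_le_iff₀ (by norm_num : (0:ℝ) < 4)]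
    exact_mod_cast (by omega : N ≤ hammingDist ((S.equivFin.symm i : V)) ((S.equivFin.symm j : V)) * 4)
end

section
/- Let (v_k) be an orthonormal family in L²(U, μ), (τ_k) a positive non-increasing sequence, and for a binary vector b ∈ {0,1}^N define β_b = N^{-1/2} Σ_{k=N+1}^{2N} τ_k^{1/2} b_{k-N} v_k. Then: (i) the RKHS norm satisfies Σ_{k=N+1}^{2N} ⟨β_b, v_k⟩²/τ_k ≤ 1; (ii) for binary vectors b, b' with Hamming distance at least N/4, the L² distance satisfies ‖β_b − β_{b'}‖² ≥ τ_{2N}/4; and (iii) for any b, b', ‖β_b − β_{b'}‖² ≤ τ_N. -/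
open Finset

lemma vg_normsq {H : Type*} [NormedAddCommGroup H] [InnerProductSpace ℝ H]
    {v : ℕ → H} (hv : Orthonormal ℝ v) (c : ℕ → ℝ) (s : Finset ℕ) :
    ‖∑ k ∈ s, c k • v k‖ ^ 2 = ∑ k ∈ s, (c k) ^ 2 := by
  rw [← real_inner_self_eq_norm_sq, hv.inner_sum]
  simp [sq]

lemma vg_rpow_sq {N : ℕ} (hN : 1 ≤ N) :
    ((N : ℝ) ^ (-(1 / 2 : ℝ))) ^ 2 = (N : ℝ)⁻¹ := by
  rw [← Real.rpow_natCast ((N : ℝ) ^ (-(1 / 2 : ℝ))) 2,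
    ← Real.rpow_mul (Nat.cast_nonneg N)]
  norm_num [Real.rpow_neg_one]

lemma vg_dist {H : Type*} [NormedAddCommGroup H] [InnerProductSpace ℝ H]
    {v : ℕ → H} (hv : Orthonormal ℝ v) (τ : ℕ → ℝ) (hτpos : ∀ k, 0 < τ k)
    {N : ℕ} (hN : 1 ≤ N) (β : (ℕ → ℝ) → H)
    (hβ : ∀ b : ℕ → ℝ, β b = (N : ℝ) ^ (-(1 / 2 : ℝ)) •
      ∑ k ∈ Icc (N + 1) (2 * N), (Real.sqrt (τ k) * b (k - N)) • v k)
    (b b' : ℕ → ℝ) :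
    ‖β b - β b'‖ ^ 2 =
      (N : ℝ)⁻¹ * ∑ k ∈ Icc (N + 1) (2 * N), τ k * (b (k - N) - b' (k - N)) ^ 2 := by
  rw [hβ, hβ, ← smul_sub, ← Finset.sum_sub_distrib]
  have h1 : ∀ k ∈ Icc (N + 1) (2 * N),
      (Real.sqrt (τ k) * b (k - N)) • v k - (Real.sqrt (τ k) * b' (k - N)) • v k
      = (Real.sqrt (τ k) * (b (k - N) - b' (k - N))) • v k := by
    intro k _; rw [← sub_smul]; ring_nf
  rw [Finset.sum_congr rfl h1, norm_smul, mul_pow, vg_normsq hv]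
  rw [Real.norm_eq_abs, abs_of_nonneg (Real.rpow_nonneg (Nat.cast_nonneg N) _), vg_rpow_sq hN]
  congr 1
  refine Finset.sum_congr rfl fun k _ => ?_
  rw [mul_pow, Real.sq_sqrt (hτpos k).le]

/-- Properties of the Varshamov–Gilbert test functions
`β_b = N^{-1/2} Σ_{k=N+1}^{2N} τ_k^{1/2} b_{k-N} v_k`:
(i) RKHS norm at most 1; (ii) L² separation `τ_{2N}/4` for binary vectors at Hamming
distance ≥ N/4; (iii) L² diameter at most `τ_N`. -/
theorem vg_test_functions {H : Type*} [NormedAddCommGroup H] [InnerProductSpace ℝ H]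
    (v : ℕ → H) (hv : Orthonormal ℝ v) (τ : ℕ → ℝ) (hτpos : ∀ k, 0 < τ k)
    (hτmono : ∀ j k, j ≤ k → τ k ≤ τ j) (N : ℕ) (hN : 1 ≤ N)
    (β : (ℕ → ℝ) → H)
    (hβ : ∀ b : ℕ → ℝ, β b = (N : ℝ) ^ (-(1 / 2 : ℝ)) •
      ∑ k ∈ Icc (N + 1) (2 * N), (Real.sqrt (τ k) * b (k - N)) • v k) :
    (∀ b : ℕ → ℝ, (∀ k, b k = 0 ∨ b k = 1) →
      ∑ k ∈ Icc (N + 1) (2 * N), (inner ℝ (β b) (v k) : ℝ) ^ 2 / τ k ≤ 1) ∧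
    (∀ b b' : ℕ → ℝ, (∀ k, b k = 0 ∨ b k = 1) → (∀ k, b' k = 0 ∨ b' k = 1) →
      (N : ℝ) / 4 ≤ (((Icc 1 N).filter fun k => b k ≠ b' k).card : ℝ) →
      τ (2 * N) / 4 ≤ ‖β b - β b'‖ ^ 2) ∧
    (∀ b b' : ℕ → ℝ, (∀ k, b k = 0 ∨ b k = 1) → (∀ k, b' k = 0 ∨ b' k = 1) →
      ‖β b - β b'‖ ^ 2 ≤ τ N) := by
  have hNpos : (0 : ℝ) < N := by exact_mod_cast hN
  have hcard : (Icc (N + 1) (2 * N)).card = N := by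
    rw [Nat.card_Icc]; omega
  refine ⟨?_, ?_, ?_⟩
  · intro b hb
    have hinner : ∀ k ∈ Icc (N + 1) (2 * N),
        (inner ℝ (β b) (v k) : ℝ) = (N : ℝ) ^ (-(1 / 2 : ℝ)) * (Real.sqrt (τ k) * b (k - N)) := by
      intro k hk
      rw [hβ, real_inner_smul_left, hv.inner_left_sum _ hk]
      simp
    calc ∑ k ∈ Icc (N + 1) (2 * N), (inner ℝ (β b) (v k) : ℝ) ^ 2 / τ k
        ≤ ∑ k ∈ Icc (N + 1) (2 * N), (N : ℝ)⁻¹ := by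
          refine Finset.sum_le_sum fun k hk => ?_
          rw [hinner k hk, mul_pow, mul_pow, Real.sq_sqrt (hτpos k).le, vg_rpow_sq hN]
          rw [div_le_iff₀ (hτpos k)]
          have hb2 : (b (k - N)) ^ 2 ≤ 1 := by rcases hb (k - N) with h | h <;> rw [h] <;> norm_num
          have : (N:ℝ)⁻¹ * (τ k * b (k - N) ^ 2) ≤ (N:ℝ)⁻¹ * (τ k * 1) := by
            apply mul_le_mul_of_nonneg_left _ (by positivity)
            exact mul_le_mul_of_nonneg_left hb2 (hτpos k).le
          linarith
      _ = 1 := by rw [Finset.sum_const, hcard, nsmul_eq_mul, mul_inv_cancel₀ hNpos.ne']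
  · intro b b' hb hb' hham
    rw [vg_dist hv τ hτpos hN β hβ]
    have hsum : ∑ k ∈ Icc (N + 1) (2 * N), τ k * (b (k - N) - b' (k - N)) ^ 2
        ≥ τ (2 * N) * (((Icc 1 N).filter fun k => b k ≠ b' k).card : ℝ) := by
      have hre : ∑ k ∈ Icc (N + 1) (2 * N), τ k * (b (k - N) - b' (k - N)) ^ 2
          = ∑ j ∈ Icc 1 N, τ (j + N) * (b j - b' j) ^ 2 := by
        refine Finset.sum_nbij' (fun k => k - N) (fun j => j + N) ?_ ?_ ?_ ?_ ?_
        · intro k hk; simp only [mem_Icc] at *; omega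
        · intro j hj; simp only [mem_Icc] at *; omega
        · intro k hk; simp only [mem_Icc] at hk; show k - N + N = k; omega
        · intro j hj; simp only [mem_Icc] at hj; show j + N - N = j; omega
        · intro k hk; simp only [mem_Icc] at hk
          congr 2 <;> omega
      rw [hre, Finset.card_filter, Nat.cast_sum]
      rw [Finset.mul_sum, ge_iff_le]
      refine Finset.sum_le_sum fun j hj => ?_
      simp only [mem_Icc] at hj
      by_cases h : b j = b' j
      · simp only [h, ne_eq, not_true_eq_false, if_false, Nat.cast_zero, mul_zero]
        exact mul_nonneg (hτpos _).le (sq_nonneg _)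
      · have : (b j - b' j) ^ 2 = 1 := by
          rcases hb j with h1 | h1 <;> rcases hb' j with h2 | h2 <;>
            simp [h1, h2] at h ⊢ <;> norm_num
        rw [this, mul_one]
        rw [if_pos h, Nat.cast_one, mul_one]
        exact hτmono (j + N) (2 * N) (by omega)
    have : τ (2 * N) * ((N : ℝ) / 4) ≤ τ (2 * N) *
        (((Icc 1 N).filter fun k => b k ≠ b' k).card : ℝ) :=
      mul_le_mul_of_nonneg_left hham (hτpos _).le
    rw [ge_iff_le] at hsum
    rw [le_inv_mul_iff₀ hNpos] at *
    calc (N : ℝ) * (τ (2 * N) / 4) = τ (2 * N) * ((N : ℝ) / 4) := by ring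
      _ ≤ _ := le_trans this hsum
  · intro b b' hb hb'
    rw [vg_dist hv τ hτpos hN β hβ]
    rw [inv_mul_le_iff₀ hNpos]
    calc ∑ k ∈ Icc (N + 1) (2 * N), τ k * (b (k - N) - b' (k - N)) ^ 2
        ≤ ∑ k ∈ Icc (N + 1) (2 * N), τ N := by
          refine Finset.sum_le_sum fun k hk => ?_
          simp only [mem_Icc] at hk
          have h1 : τ k ≤ τ N := hτmono N k (by omega)
          have h2 : (b (k - N) - b' (k - N)) ^ 2 ≤ 1 := by
            rcases hb (k - N) with ha | ha <;> rcases hb' (k - N) with hc | hc <;>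
              rw [ha, hc] <;> norm_num
          calc τ k * (b (k - N) - b' (k - N)) ^ 2 ≤ τ k * 1 :=
                mul_le_mul_of_nonneg_left h2 (hτpos k).le
            _ = τ k := mul_one _
            _ ≤ τ N := h1
      _ = (N : ℝ) * τ N := by rw [Finset.sum_const, hcard, nsmul_eq_mul]
end
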